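/- arXiv:1508.07663 — 6 statements merged into one kernel-verified Lean document; each statement's English description precedes it below -/
import Mathlib

section
/- The commutator subgroup of GL₂(ℤ/4ℤ) has index 2 in SL₂(ℤ/4ℤ). -/
/-!
Besides the determinant, `GL₂(ℤ/4ℤ)` has a second abelian character: reduction mod 2 to
`GL₂(𝔽₂) ≅ S₃` followed by the sign. The commutator subgroup is exactly the common kernel of the
determinant and this sign. For `⊇`, a kernel element `x` reduces into `A₃`, which is generated by
the reduction of a commutator `t`; after dividing by a power of `t`, `x` lies in the congruence
kernel of `SL₂(ℤ/4ℤ)`, an elementary abelian group of order 8 generated by three commutators.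
Since the sign is onto on `SL₂(ℤ/4ℤ)`, the index is `|ℤˣ| = 2`.
-/

open Matrix
open scoped commutatorElement

theorem commutatorElement_mem_commutator {G : Type*} [Group G] (g h : G) :
    ⁅g, h⁆ ∈ commutator G := by
  rw [commutator_eq_closure]
  exact Subgroup.subset_closure (commutator_mem_commutatorSet g h)

theorem Subgroup.le_of_map_le_of_inf_ker_le {G Q : Type*} [Group G] [Group Q] {C H : Subgroup G}
    (f : G →* Q) (hCH : C ≤ H) (hmap : H.map f ≤ C.map f) (hker : H ⊓ f.ker ≤ C) : H ≤ C := by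
  intro x hx
  obtain ⟨c, hc, hcx⟩ := hmap ⟨x, hx, rfl⟩
  have hxc : x * c⁻¹ ∈ H ⊓ f.ker :=
    Subgroup.mem_inf.mpr ⟨mul_mem hx (inv_mem (hCH hc)), by simp [hcx]⟩
  simpa using mul_mem (hker hxc) hc

namespace GL2ZMod4

def reduceModTwo : GL (Fin 2) (ZMod 4) →* GL (Fin 2) (ZMod 2) :=
  GeneralLinearGroup.map (ZMod.castHom (by norm_num) (ZMod 2))

/-- `GL₂(𝔽₂)` permutes the three nonzero vectors of `𝔽₂²` (and fixes `0`), which identifies it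
with `S₃`. -/
def permSign : GL (Fin 2) (ZMod 2) →* ℤˣ :=
  Equiv.Perm.sign.comp (MulAction.toPermHom _ (Fin 2 → ZMod 2))

def w : GL (Fin 2) (ZMod 4) := ⟨!![0, 1; 1, 0], !![0, 1; 1, 0], by decide, by decide⟩
def j : GL (Fin 2) (ZMod 4) := ⟨!![0, 1; -1, 0], !![0, -1; 1, 0], by decide, by decide⟩
def t : GL (Fin 2) (ZMod 4) := ⟨!![0, 1; -1, -1], !![-1, -1; 1, 0], by decide, by decide⟩
def d : GL (Fin 2) (ZMod 4) := ⟨!![1, 0; 0, -1], !![1, 0; 0, -1], by decide, by decide⟩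
def e : GL (Fin 2) (ZMod 4) := ⟨!![1, 1; 0, 1], !![1, -1; 0, 1], by decide, by decide⟩
def f : GL (Fin 2) (ZMod 4) := ⟨!![1, 0; 1, 1], !![1, 0; -1, 1], by decide, by decide⟩

theorem commutatorElement_w_t : ⁅w, t⁆ = t := Units.ext (by decide)

theorem t_mem_commutator : t ∈ commutator (GL (Fin 2) (ZMod 4)) :=
  commutatorElement_w_t ▸ commutatorElement_mem_commutator w t

theorem exists_reduceModTwo_t_pow_eq_of_permSign_eq_one :
    ∀ g : GL (Fin 2) (ZMod 2), permSign g = 1 → ∃ k : Fin 3, reduceModTwo (t ^ (k : ℕ)) = g := by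
  decide

set_option maxRecDepth 4000 in
theorem exists_eq_commutator_pows_of_map_eq_one_of_det_eq_one :
    ∀ A : Matrix (Fin 2) (Fin 2) (ZMod 4),
      A.map (ZMod.castHom (by norm_num) (ZMod 2)) = 1 → A.det = 1 →
      ∃ a b c : Fin 2, A = ↑(⁅d, e⁆ ^ (a : ℕ) * ⁅d, f⁆ ^ (b : ℕ) * ⁅w, j⁆ ^ (c : ℕ)) := by
  decide

theorem det_j : GeneralLinearGroup.det j = 1 := Units.ext (by decide)

theorem permSign_reduceModTwo_j : permSign (reduceModTwo j) = -1 := by decide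

theorem commutator_eq_ker_permSign_inf_ker_det :
    commutator (GL (Fin 2) (ZMod 4)) =
      (permSign.comp reduceModTwo).ker ⊓ (GeneralLinearGroup.det (n := Fin 2) (R := ZMod 4)).ker := by
  have hle := le_inf (Abelianization.commutator_subset_ker (permSign.comp reduceModTwo))
    (Abelianization.commutator_subset_ker GeneralLinearGroup.det)
  refine le_antisymm hle (Subgroup.le_of_map_le_of_inf_ker_le reduceModTwo hle ?_ ?_)
  · rintro _ ⟨x, ⟨hx, -⟩, rfl⟩
    obtain ⟨k, hk⟩ := exists_reduceModTwo_t_pow_eq_of_permSign_eq_one _ hx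
    exact ⟨t ^ (k : ℕ), pow_mem t_mem_commutator _, hk⟩
  · rintro x ⟨⟨-, hdet⟩, hred⟩
    obtain ⟨a, b, c, hx⟩ := exists_eq_commutator_pows_of_map_eq_one_of_det_eq_one x
      (congrArg Units.val hred) (by simpa using congrArg Units.val hdet)
    rw [Units.ext hx]
    exact mul_mem (mul_mem (pow_mem (commutatorElement_mem_commutator d e) _)
      (pow_mem (commutatorElement_mem_commutator d f) _))
      (pow_mem (commutatorElement_mem_commutator w j) _)

theorem map_permSign_ker_det_eq_top :
    (GeneralLinearGroup.det (n := Fin 2) (R := ZMod 4)).ker.map (permSign.comp reduceModTwo) = ⊤ := by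
  refine eq_top_iff.mpr fun u _ => ?_
  rcases Int.units_eq_one_or u with rfl | rfl
  exacts [one_mem _, ⟨j, det_j, permSign_reduceModTwo_j⟩]

end GL2ZMod4

open GL2ZMod4 in
/-- the commutator subgroup of `GL₂(ℤ/4ℤ)` has index 2 in
`SL₂(ℤ/4ℤ)` (the kernel of the determinant). -/
theorem commutator_GL2_ZMod4_index_two :
    (commutator (GL (Fin 2) (ZMod 4))).relIndex
      (Matrix.GeneralLinearGroup.det (n := Fin 2) (R := ZMod 4)).ker = 2 := by
  rw [commutator_eq_ker_permSign_inf_ker_det, Subgroup.inf_relIndex_right, Subgroup.relIndex_ker,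
    map_permSign_ker_det_eq_top, Subgroup.card_top, Nat.card_eq_fintype_card,
    Fintype.card_units_int]
end

section
/- The commutator subgroup of GL₂(ℤ₃) (closed commutator subgroup of the profinite group) equals SL₂(ℤ₃), and the commutator subgroup of GL₂(ℤ₂) has index 2 in SL₂(ℤ₂). -/
/-!
For a unit `u` of a commutative ring, the commutators of `diag(u, 1)` with the elementary
matrices `E(x)`, `F(x)` and with the antidiagonal matrix are `E((u - 1)x)`, `F((u⁻¹ - 1)x)` and
`diag(u, u⁻¹)`. A determinant-one matrix with invertible corner factors as
`F(c) diag(a, a⁻¹) E(b)`, so it is a product of commutators once `u - 1` divides `b` and `c`.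

In `ℤ₃` take `u = -1`: then `u - 1 = -2` is a unit, and as `ℤ₃` is local, every element of
`SL₂(ℤ₃)` has invertible corner after multiplication by `E(1)` if need be.

In `ℤ₂` take `u = 3`: this reaches the elements of `SL₂(ℤ₂)` that are trivial mod 2. Reduction
mod 2 maps onto `GL₂(𝔽₂) ≅ S₃`, whose sign character kills commutators but not `SL₂(ℤ₂)`, while
the commutator `⁅E(1), F(1)⁆` lifts the 3-cycle; so the commutator subgroup of `GL₂(ℤ₂)` is the
index-2 kernel of the sign in `SL₂(ℤ₂)`.

Both commutator subgroups are kernels of continuous characters, hence already closed.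
-/

open Matrix
open scoped commutatorElement

namespace Matrix.GeneralLinearGroup

section Elementary

variable {R : Type*} [CommRing R]

def lowerLeft (x : R) : GL (Fin 2) R :=
  ⟨!![1, 0; x, 1], !![1, 0; -x, 1], by simp [one_fin_two], by simp [one_fin_two]⟩

def diag (u v : Rˣ) : GL (Fin 2) R :=
  ⟨!![(u : R), 0; 0, (v : R)], !![((u⁻¹ : Rˣ) : R), 0; 0, ((v⁻¹ : Rˣ) : R)],
    by simp [one_fin_two], by simp [one_fin_two]⟩

def antidiag : GL (Fin 2) R :=
  ⟨!![0, 1; 1, 0], !![0, 1; 1, 0], by simp [one_fin_two], by simp [one_fin_two]⟩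

lemma commutatorElement_diag_upperRightHom (u : Rˣ) (x : R) :
    ⁅diag u 1, upperRightHom x⁆ = upperRightHom (((u : R) - 1) * x) := by
  ext i j
  fin_cases i <;> fin_cases j <;> simp [commutatorElement_def, diag, Units.inv_mk]
  ring

lemma commutatorElement_diag_lowerLeft (u : Rˣ) (x : R) :
    ⁅diag u 1, lowerLeft x⁆ = lowerLeft ((((u⁻¹ : Rˣ) : R) - 1) * x) := by
  ext i j
  fin_cases i <;> fin_cases j <;> simp [commutatorElement_def, diag, lowerLeft, Units.inv_mk]
  ring

lemma commutatorElement_diag_antidiag (u : Rˣ) : ⁅diag u 1, antidiag⁆ = diag u u⁻¹ := by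
  ext i j
  fin_cases i <;> fin_cases j <;> simp [commutatorElement_def, diag, antidiag, Units.inv_mk]

lemma eq_lowerLeft_mul_diag_mul_upperRightHom {M : GL (Fin 2) R}
    (hM : (M : Matrix (Fin 2) (Fin 2) R).det = 1) {u : Rˣ} (hu : (u : R) = M 0 0) :
    M = lowerLeft (M 1 0 * ((u⁻¹ : Rˣ) : R)) * diag u u⁻¹ *
      upperRightHom (M 0 1 * ((u⁻¹ : Rˣ) : R)) := by
  have hu' : (u : R) * ((u⁻¹ : Rˣ) : R) = 1 := u.mul_inv
  rw [det_fin_two] at hM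
  ext i j
  fin_cases i <;> fin_cases j <;> simp [diag, lowerLeft]
  · exact hu.symm
  · linear_combination (-M 0 1) * hu'
  · linear_combination (-M 1 1) * hu' + ((u⁻¹ : Rˣ) : R) * hM + (M 1 1 * ((u⁻¹ : Rˣ) : R)) * hu

lemma diag_mem_commutator (u : Rˣ) : diag u u⁻¹ ∈ commutator (GL (Fin 2) R) :=
  commutatorElement_diag_antidiag u ▸
    Subgroup.commutator_mem_commutator (Subgroup.mem_top _) (Subgroup.mem_top _)

lemma upperRightHom_mem_commutator {u : Rˣ} {x : R} (hx : (u : R) - 1 ∣ x) :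
    upperRightHom x ∈ commutator (GL (Fin 2) R) := by
  obtain ⟨y, rfl⟩ := hx
  exact commutatorElement_diag_upperRightHom u y ▸
    Subgroup.commutator_mem_commutator (Subgroup.mem_top _) (Subgroup.mem_top _)

lemma lowerLeft_mem_commutator {u : Rˣ} {x : R} (hx : (u : R) - 1 ∣ x) :
    lowerLeft x ∈ commutator (GL (Fin 2) R) := by
  obtain ⟨y, rfl⟩ := hx
  have h : (((u⁻¹ : Rˣ) : R) - 1) * (-(u * y)) = ((u : R) - 1) * y := by
    linear_combination (-y) * u.inv_mul
  exact h ▸ commutatorElement_diag_lowerLeft u _ ▸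
    Subgroup.commutator_mem_commutator (Subgroup.mem_top _) (Subgroup.mem_top _)

lemma mem_commutator_of_det_eq_one (u : Rˣ) {M : GL (Fin 2) R}
    (hM : (M : Matrix (Fin 2) (Fin 2) R).det = 1) (h00 : IsUnit (M 0 0))
    (h01 : (u : R) - 1 ∣ M 0 1) (h10 : (u : R) - 1 ∣ M 1 0) :
    M ∈ commutator (GL (Fin 2) R) := by
  obtain ⟨v, hv⟩ := h00
  rw [eq_lowerLeft_mul_diag_mul_upperRightHom hM hv]
  exact mul_mem (mul_mem (lowerLeft_mem_commutator (h10.mul_right _)) (diag_mem_commutator v))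
    (upperRightHom_mem_commutator (h01.mul_right _))

lemma map_upperRightHom {S : Type*} [CommRing S] (f : R →+* S) (x : R) :
    map f (upperRightHom x) = upperRightHom (f x) := by
  ext i j
  fin_cases i <;> fin_cases j <;> simp

lemma map_lowerLeft {S : Type*} [CommRing S] (f : R →+* S) (x : R) :
    map f (lowerLeft x) = lowerLeft (f x) := by
  ext i j
  fin_cases i <;> fin_cases j <;> simp [lowerLeft]

lemma mem_ker_det_iff {n : Type*} [Fintype n] [DecidableEq n] {M : GL n R} :
    M ∈ det.ker ↔ (M : Matrix n n R).det = 1 := by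
  simp [Units.ext_iff]

end Elementary

section LocalRing

variable {R : Type*} [CommRing R] [IsLocalRing R]

lemma isUnit_add_of_det_eq_one {M : Matrix (Fin 2) (Fin 2) R} (hM : M.det = 1)
    (h00 : ¬IsUnit (M 0 0)) : IsUnit (M 0 0 + M 1 0) := by
  rw [det_fin_two, sub_eq_add_neg] at hM
  have h10 : IsUnit (M 1 0) := by
    obtain h | h := IsLocalRing.isUnit_or_isUnit_of_isUnit_add (hM ▸ isUnit_one)
    · exact absurd (isUnit_of_mul_isUnit_left h) h00
    · exact isUnit_of_mul_isUnit_right (by simpa using h.neg)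
  refine (IsLocalRing.isUnit_or_isUnit_of_isUnit_add (a := M 0 0 + M 1 0) (b := -M 0 0)
    (by simpa using h10)).resolve_right ?_
  simpa using h00

theorem commutator_eq_ker_det_of_isUnit_sub_one (u : Rˣ) (hu : IsUnit ((u : R) - 1)) :
    commutator (GL (Fin 2) R) = det.ker := by
  refine le_antisymm (Abelianization.commutator_subset_ker _) fun M hM ↦ ?_
  rw [mem_ker_det_iff] at hM
  have hdvd (x : R) : (u : R) - 1 ∣ x := hu.dvd
  by_cases h00 : IsUnit (M 0 0)
  · exact mem_commutator_of_det_eq_one u hM h00 (hdvd _) (hdvd _)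
  · have hN : upperRightHom 1 * M ∈ commutator (GL (Fin 2) R) := by
      refine mem_commutator_of_det_eq_one u ?_ ?_ (hdvd _) (hdvd _)
      · rw [Units.val_mul, det_mul, hM, mul_one]
        simp [det_fin_two]
      · simpa [mul_apply, Fin.sum_univ_two] using isUnit_add_of_det_eq_one hM h00
    rw [← inv_mul_cancel_left (upperRightHom (1 : R)) M, ← AddChar.map_neg_eq_inv]
    exact mul_mem (upperRightHom_mem_commutator (hdvd _)) hN

end LocalRing

lemma isClosed_ker_det {n R : Type*} [Fintype n] [DecidableEq n] [CommRing R]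
    [TopologicalSpace R] [IsTopologicalRing R] [T2Space R] :
    IsClosed ((det : GL n R →* Rˣ).ker : Set (GL n R)) :=
  isClosed_singleton.preimage GeneralLinearGroup.continuous_det

end Matrix.GeneralLinearGroup

namespace PadicInt

variable {p : ℕ} [Fact p.Prime]

lemma isUnit_iff_toZMod_ne_zero {x : ℤ_[p]} : IsUnit x ↔ toZMod x ≠ 0 := by
  rw [ne_eq, ← RingHom.mem_ker, ker_toZMod, IsLocalRing.mem_maximalIdeal, mem_nonunits_iff,
    not_not]

lemma dvd_of_toZMod_eq_zero {x : ℤ_[p]} (hx : toZMod x = 0) : (p : ℤ_[p]) ∣ x := by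
  rwa [← Ideal.mem_span_singleton, ← maximalIdeal_eq_span_p, ← ker_toZMod]

lemma continuous_toZMod : Continuous (toZMod : ℤ_[p] →+* ZMod p) := by
  refine continuous_of_continuousAt_zero _ ?_
  rw [ContinuousAt, map_zero, nhds_discrete (ZMod p), Filter.tendsto_pure]
  filter_upwards [Metric.ball_mem_nhds 0 one_pos] with x hx
  rw [← not_ne_iff, ← isUnit_iff_toZMod_ne_zero, not_isUnit_iff]
  exact mem_ball_zero_iff.mp hx

end PadicInt

open Matrix.GeneralLinearGroup

lemma IsClosed.subgroup_topologicalClosure_eq {G : Type*} [Group G] [TopologicalSpace G]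
    [IsTopologicalGroup G] {H : Subgroup G} (hH : IsClosed (H : Set G)) :
    H.topologicalClosure = H :=
  SetLike.ext' hH.closure_eq

theorem commutator_GL2_Z3_eq_ker_det : commutator (GL (Fin 2) ℤ_[3]) = det.ker :=
  commutator_eq_ker_det_of_isUnit_sub_one (-1) <| by
    rw [PadicInt.isUnit_iff_toZMod_ne_zero]
    simp only [Units.val_neg, Units.val_one, map_sub, map_neg, map_one]
    decide

def cycleF2 : GL (Fin 2) (ZMod 2) :=
  ⟨!![1, 1; 1, 0], !![0, 1; 1, 1], by decide, by decide⟩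

/-- `GL₂(𝔽₂) ≅ S₃` acting on the three nonzero vectors of `𝔽₂²`; this is the sign character,
whose kernel is generated by the element `cycleF2` of order 3. -/
def signF2 : GL (Fin 2) (ZMod 2) →* ℤˣ where
  toFun g := if g = 1 ∨ g = cycleF2 ∨ g = cycleF2 ^ 2 then 1 else -1
  map_one' := by decide
  map_mul' := by decide

lemma exists_eq_cycleF2_pow_of_signF2_eq_one {g : GL (Fin 2) (ZMod 2)}
    (hg : signF2 g = 1) : ∃ k : ℕ, g = cycleF2 ^ k := by
  have : g = 1 ∨ g = cycleF2 ∨ g = cycleF2 ^ 2 := by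
    by_contra h
    simp [signF2, h] at hg
  rcases this with h | h | h
  exacts [⟨0, h⟩, ⟨1, h.trans (pow_one _).symm⟩, ⟨2, h⟩]

noncomputable def signZ2 : GL (Fin 2) ℤ_[2] →* ℤˣ :=
  signF2.comp (map PadicInt.toZMod)

lemma continuous_signZ2 : Continuous signZ2 :=
  (continuous_of_discreteTopology (f := signF2)).comp
    PadicInt.continuous_toZMod.generalLinearGroup_map

lemma mem_commutator_of_map_toZMod_eq_one {M : GL (Fin 2) ℤ_[2]}
    (hM : (M : Matrix (Fin 2) (Fin 2) ℤ_[2]).det = 1) (hred : map PadicInt.toZMod M = 1) :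
    M ∈ commutator (GL (Fin 2) ℤ_[2]) := by
  have hentry (i j : Fin 2) :
      PadicInt.toZMod (M i j) = (1 : Matrix (Fin 2) (Fin 2) (ZMod 2)) i j := by
    simpa using congrArg (fun g : GL (Fin 2) (ZMod 2) ↦ (g : Matrix (Fin 2) (Fin 2) (ZMod 2)) i j)
      hred
  obtain ⟨u, hu⟩ : IsUnit (3 : ℤ_[2]) :=
    PadicInt.isUnit_iff_toZMod_ne_zero.mpr (by rw [map_ofNat]; decide)
  have hdvd {x : ℤ_[2]} (hx : PadicInt.toZMod x = 0) : (u : ℤ_[2]) - 1 ∣ x := by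
    rw [hu, show (3 : ℤ_[2]) - 1 = (2 : ℕ) by norm_num]
    exact PadicInt.dvd_of_toZMod_eq_zero hx
  refine mem_commutator_of_det_eq_one u hM ?_ (hdvd ?_) (hdvd ?_)
  · exact PadicInt.isUnit_iff_toZMod_ne_zero.mpr (by simp [hentry])
  · simpa using hentry 0 1
  · simpa using hentry 1 0

noncomputable def cycleZ2 : GL (Fin 2) ℤ_[2] := ⁅upperRightHom (1 : ℤ_[2]), lowerLeft 1⁆

lemma map_toZMod_cycleZ2 : map PadicInt.toZMod cycleZ2 = cycleF2 := by
  simp only [cycleZ2, map_commutatorElement, map_upperRightHom, map_lowerLeft, map_one]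
  decide

theorem commutator_GL2_Z2_eq_ker_signZ2_inf_ker_det :
    commutator (GL (Fin 2) ℤ_[2]) = signZ2.ker ⊓ det.ker := by
  refine le_antisymm (le_inf (Abelianization.commutator_subset_ker _)
    (Abelianization.commutator_subset_ker _)) fun M ⟨hsign, hdet⟩ ↦ ?_
  obtain ⟨k, hk⟩ := exists_eq_cycleF2_pow_of_signF2_eq_one hsign
  have hlift : cycleZ2 ∈ commutator (GL (Fin 2) ℤ_[2]) :=
    Subgroup.commutator_mem_commutator (Subgroup.mem_top _) (Subgroup.mem_top _)
  have hcycle : cycleZ2 ∈ det.ker := Abelianization.commutator_subset_ker _ hlift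
  have hrest : M * (cycleZ2 ^ k)⁻¹ ∈ commutator (GL (Fin 2) ℤ_[2]) := by
    refine mem_commutator_of_map_toZMod_eq_one ?_ ?_
    · exact mem_ker_det_iff.mp (mul_mem hdet (inv_mem (pow_mem hcycle k)))
    · rw [map_mul, map_inv, map_pow, map_toZMod_cycleZ2, ← hk, mul_inv_cancel]
  simpa using mul_mem hrest (pow_mem hlift k)

lemma signZ2_upperRightHom_one : signZ2 (upperRightHom 1) = -1 := by
  simp only [signZ2, MonoidHom.comp_apply, map_upperRightHom, map_one]
  decide

lemma map_signZ2_ker_det_eq_top : (det : GL (Fin 2) ℤ_[2] →* ℤ_[2]ˣ).ker.map signZ2 = ⊤ := by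
  refine eq_top_iff.mpr fun x _ ↦ ?_
  rcases Int.units_eq_one_or x with rfl | rfl
  · exact one_mem _
  · exact ⟨upperRightHom 1, mem_ker_det_iff.mpr (by simp [det_fin_two]), signZ2_upperRightHom_one⟩

/-- the closed commutator subgroup of `GL₂(ℤ₃)` equals `SL₂(ℤ₃)`
(the kernel of the determinant), and the closed commutator subgroup of `GL₂(ℤ₂)`
has index 2 in `SL₂(ℤ₂)`. -/
theorem commutator_GL2_Z3_and_Z2 :
    (commutator (GL (Fin 2) ℤ_[3])).topologicalClosure
        = (Matrix.GeneralLinearGroup.det (n := Fin 2) (R := ℤ_[3])).ker ∧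
      (commutator (GL (Fin 2) ℤ_[2])).topologicalClosure.relIndex
        (Matrix.GeneralLinearGroup.det (n := Fin 2) (R := ℤ_[2])).ker = 2 := by
  constructor
  · rw [commutator_GL2_Z3_eq_ker_det]
    exact IsClosed.subgroup_topologicalClosure_eq isClosed_ker_det
  · have hclosed : IsClosed ((signZ2.ker ⊓ det.ker : Subgroup _) : Set (GL (Fin 2) ℤ_[2])) :=
      (isClosed_singleton.preimage continuous_signZ2).inter isClosed_ker_det
    rw [commutator_GL2_Z2_eq_ker_signZ2_inf_ker_det, hclosed.subgroup_topologicalClosure_eq,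
      Subgroup.inf_relIndex_right, Subgroup.relIndex_ker, map_signZ2_ker_det_eq_top,
      Subgroup.card_top, Nat.card_eq_fintype_card, Fintype.card_units_int]
end

section
/- For every prime ℓ, the topological commutator subgroup GL₂(ℤ_ℓ)' of GL₂(ℤ_ℓ) is topologically generated by the set of commutators ABA⁻¹B⁻¹ where A, B range over pairs of matrices in GL₂(ℤ_ℓ) with det(A) = det(B). -/
/-!
Let `N` be the subgroup generated by the commutators `[a, b]` with `det a = det b`. It is normal,
and in `GL_n(R) ⧸ N` classes of equal determinant commute; comparing `a` with `a * b` shows that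
classes of determinant `1` are central. Every matrix is a determinant-one matrix times
`diag(u, 1, …, 1)`, and these diagonal matrices commute, so the quotient is abelian: `N` is
already the whole commutator subgroup, before taking closures.
-/

open Matrix

section SameFiber

variable {G M : Type*} [Group G] [Group M] (f : G →* M)

def sameFiberCommutators : Set G :=
  {x | ∃ a b : G, f a = f b ∧ x = a * b * a⁻¹ * b⁻¹}

local notation "N" => Subgroup.closure (sameFiberCommutators f)

theorem conj_mem_sameFiberCommutators {x : G} (hx : x ∈ sameFiberCommutators f) (g : G) :
    g * x * g⁻¹ ∈ sameFiberCommutators f := by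
  obtain ⟨a, b, hab, rfl⟩ := hx
  exact ⟨g * a * g⁻¹, g * b * g⁻¹, by simp [hab], by group⟩

instance normal_closure_sameFiberCommutators : (N).Normal where
  conj_mem n hn g := by
    have hmap : (N).map (MulAut.conj g).toMonoidHom ≤ N := by
      rw [MonoidHom.map_closure]
      refine Subgroup.closure_mono ?_
      rintro _ ⟨x, hx, rfl⟩
      exact conj_mem_sameFiberCommutators f hx g
    exact hmap ⟨n, hn, rfl⟩

variable {f}

theorem commute_mk_of_map_eq {a b : G} (h : f a = f b) :
    Commute (a : G ⧸ N) (b : G ⧸ N) := by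
  show ((a * b : G) : G ⧸ N) = ((b * a : G) : G ⧸ N)
  rw [QuotientGroup.eq]
  exact Subgroup.subset_closure ⟨b⁻¹, a⁻¹, by simp [h], by group⟩

theorem commute_mk_of_map_eq_one (a : G) {b : G} (h : f b = 1) :
    Commute (a : G ⧸ N) (b : G ⧸ N) := by
  have hab : Commute (a : G ⧸ N) ((a * b : G) : G ⧸ N) :=
    commute_mk_of_map_eq (by rw [map_mul, h, mul_one])
  rw [QuotientGroup.mk_mul] at hab
  simpa using (Commute.refl (a : G ⧸ N)).inv_right.mul_right hab

end SameFiber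

section SplitHom

variable {G M : Type*} [Group G] [CommGroup M] {f : G →* M} {s : M →* G}

local notation "N" => Subgroup.closure (sameFiberCommutators f)

theorem commute_mk_of_section (hs : ∀ m, f (s m) = m) (a b : G) :
    Commute (a : G ⧸ N) (b : G ⧸ N) := by
  have decompose (x : G) : (x : G ⧸ N) = ((x * (s (f x))⁻¹ : G) : G ⧸ N) * (s (f x) : G ⧸ N) := by
    rw [← QuotientGroup.mk_mul, inv_mul_cancel_right]
  have map_eq_one (x : G) : f (x * (s (f x))⁻¹) = 1 := by simp [hs]
  rw [decompose a]
  refine Commute.mul_left (commute_mk_of_map_eq_one b (map_eq_one a)).symm ?_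
  rw [decompose b]
  refine Commute.mul_right (commute_mk_of_map_eq_one _ (map_eq_one b)) ?_
  exact ((Commute.all (f a) (f b)).map s).map (QuotientGroup.mk' N)

theorem commutator_eq_closure_sameFiberCommutators (hs : ∀ m, f (s m) = m) :
    commutator G = Subgroup.closure (sameFiberCommutators f) := by
  refine le_antisymm ?_ ?_
  · rw [commutator_def, Subgroup.commutator_le]
    intro a _ b _
    rw [← QuotientGroup.eq_one_iff]
    exact (map_commutatorElement (QuotientGroup.mk' _) a b).trans
      (commutatorElement_eq_one_iff_commute.mpr (commute_mk_of_section hs a b))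
  · rw [Subgroup.closure_le]
    rintro _ ⟨a, b, -, rfl⟩
    rw [← commutatorElement_def]
    exact Subgroup.commutator_mem_commutator (Subgroup.mem_top a) (Subgroup.mem_top b)

end SplitHom

namespace Matrix.GeneralLinearGroup

variable {n R : Type*} [Fintype n] [DecidableEq n] [CommRing R]

def diagonalUnit (i : n) : Rˣ →* GL n R :=
  (Units.map (diagonalRingHom n R : (n → R) →* Matrix n n R)).comp
    (MulEquiv.piUnits.symm.toMonoidHom.comp (MonoidHom.mulSingle (fun _ ↦ Rˣ) i))

theorem det_diagonalUnit (i : n) (u : Rˣ) : det (diagonalUnit i u) = u := by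
  ext
  simp [diagonalUnit, Pi.mulSingle_apply, apply_ite]

theorem commutator_eq_closure_sameFiberCommutators_det [Nonempty n] :
    commutator (GL n R) = Subgroup.closure (sameFiberCommutators det) :=
  commutator_eq_closure_sameFiberCommutators (det_diagonalUnit (Classical.arbitrary n))

end Matrix.GeneralLinearGroup

/-- for every prime `ℓ`, the closed commutator subgroup of `GL₂(ℤ_ℓ)`
is topologically generated by the commutators `A * B * A⁻¹ * B⁻¹` with
`A, B ∈ GL₂(ℤ_ℓ)` satisfying `det A = det B`. -/
theorem GL2_Zl_commutator_topologically_generated_by_equal_det_commutators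
    (ℓ : ℕ) [Fact ℓ.Prime] :
    (commutator (GL (Fin 2) ℤ_[ℓ])).topologicalClosure
      = (Subgroup.closure {x : GL (Fin 2) ℤ_[ℓ] |
          ∃ A B : GL (Fin 2) ℤ_[ℓ],
            Matrix.GeneralLinearGroup.det A = Matrix.GeneralLinearGroup.det B ∧
              x = A * B * A⁻¹ * B⁻¹}).topologicalClosure := by
  rw [GeneralLinearGroup.commutator_eq_closure_sameFiberCommutators_det]
  rfl
end

section
/- Goursat-type lemma for profinite groups: Let B₁, …, Bₙ be profinite groups such that for all distinct i, j, the groups B_i and B_j have no finite simple group as a common (continuous) quotient. If H is a closed subgroup of the product ∏ᵢ Bᵢ such that each projection pⱼ : H → Bⱼ is surjective, then H = ∏ᵢ Bᵢ. -/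
/-!
A closed subgroup `H` of a profinite group is everything as soon as `H N` is everything for each
open normal subgroup `N`. In `∏ Bᵢ` such an `N` contains `∏ Uᵢ` with `Uᵢ = N ∩ Bᵢ` open normal
in `Bᵢ`, so it suffices to treat the image of `H` in the finite group `∏ Bᵢ/Uᵢ`. For finite
groups induct on `n`, splitting `∏ Gᵢ = G₀ × ∏_{i>0} Gᵢ`: by Goursat's lemma a subgroup projecting
onto both factors induces an isomorphism between a quotient of `G₀` and one of `∏_{i>0} Gᵢ`; if
these are nontrivial they have a common simple quotient, and a simple quotient of a product is
already a quotient of one factor.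
-/

open Function

universe u v

/-- Every quotient of `G` lives in `Type u`, so quantifying over `Q : Type u` loses nothing. -/
def NoCommonFiniteSimpleQuotient (G : Type u) (H : Type v) [Group G] [Group H] : Prop :=
  ∀ (Q : Type u) [Group Q] [Finite Q] [IsSimpleGroup Q] (f : G →* Q) (g : H →* Q),
    Surjective f → Surjective g → False

theorem exists_surjective_isSimpleGroup (G : Type u) [Group G] [Finite G] [Nontrivial G] :
    ∃ (Q : Type u) (_ : Group Q) (_ : IsSimpleGroup Q) (f : G →* Q), Surjective f := by
  induction h : Nat.card G using Nat.strong_induction_on generalizing G with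
  | _ n ih =>
  by_cases hG : IsSimpleGroup G
  · exact ⟨G, _, hG, MonoidHom.id G, surjective_id⟩
  obtain ⟨N, hN, hN_bot, hN_top⟩ : ∃ N : Subgroup G, N.Normal ∧ N ≠ ⊥ ∧ N ≠ ⊤ := by
    by_contra! h
    exact hG ⟨fun N hN => or_iff_not_imp_left.mpr (h N hN)⟩
  have : Nontrivial (G ⧸ N) := QuotientGroup.nontrivial_iff.mpr hN_top
  have hcard : Nat.card (G ⧸ N) < n := by
    rw [← h, N.card_eq_card_quotient_mul_card_subgroup]
    exact lt_mul_of_one_lt_right Nat.card_pos (N.one_lt_card_iff_ne_bot.mpr hN_bot)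
  obtain ⟨Q, _, hQ, f, hf⟩ := ih _ hcard (G ⧸ N) rfl
  exact ⟨Q, _, hQ, f.comp (QuotientGroup.mk' N), hf.comp (QuotientGroup.mk'_surjective N)⟩

instance MonoidHom.normal_range_mulSingle {ι : Type*} [DecidableEq ι] (G : ι → Type*)
    [∀ i, Group (G i)] (i : ι) : (MonoidHom.mulSingle G i).range.Normal where
  conj_mem := by
    rintro _ ⟨a, rfl⟩ y
    refine ⟨y i * a * (y i)⁻¹, funext fun j => ?_⟩
    by_cases hj : j = i
    · subst hj; simp
    · simp [Pi.mulSingle_eq_of_ne hj]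

theorem exists_surjective_comp_mulSingle {ι : Type*} [Finite ι] [DecidableEq ι] {G : ι → Type*}
    [∀ i, Group (G i)] {Q : Type*} [Group Q] [IsSimpleGroup Q] {g : (∀ i, G i) →* Q}
    (hg : Surjective g) : ∃ i, Surjective (g.comp (MonoidHom.mulSingle G i)) := by
  by_contra! h
  have hker (i : ι) (a : G i) : Pi.mulSingle i a ∈ g.ker := by
    have hbot : (g.comp (MonoidHom.mulSingle G i)).range = ⊥ := by
      rw [MonoidHom.range_comp]
      refine (((MonoidHom.normal_range_mulSingle G i).map g hg).eq_bot_or_eq_top).resolve_right ?_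
      rw [← MonoidHom.range_comp, MonoidHom.range_eq_top]
      exact h i
    exact DFunLike.congr_fun (MonoidHom.range_eq_bot_iff.mp hbot) a
  obtain ⟨q, hq⟩ := exists_ne (1 : Q)
  obtain ⟨x, rfl⟩ := hg q
  exact hq (Subgroup.pi_mem_of_mulSingle_mem (H := g.ker) x fun i => hker i (x i))

theorem NoCommonFiniteSimpleQuotient.pi {ι : Type*} [Finite ι] {G : Type u} {H : ι → Type v}
    [Group G] [∀ i, Group (H i)] (h : ∀ i, NoCommonFiniteSimpleQuotient G (H i)) :
    NoCommonFiniteSimpleQuotient G (∀ i, H i) := by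
  classical
  intro Q _ _ _ f g hf hg
  obtain ⟨i, hi⟩ := exists_surjective_comp_mulSingle hg
  exact h i Q f _ hf hi

theorem Subgroup.eq_top_of_noCommonFiniteSimpleQuotient {G : Type u} {H : Type v} [Group G]
    [Group H] [Finite G] (hGH : NoCommonFiniteSimpleQuotient G H) {I : Subgroup (G × H)}
    (h₁ : Surjective (Prod.fst ∘ I.subtype)) (h₂ : Surjective (Prod.snd ∘ I.subtype)) :
    I = ⊤ := by
  have := normal_goursatFst h₁
  have := normal_goursatSnd h₂
  obtain ⟨e, -⟩ := goursat_surjective h₁ h₂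
  have hfst : I.goursatFst = ⊤ := by
    by_contra hne
    have : Nontrivial (G ⧸ I.goursatFst) := QuotientGroup.nontrivial_iff.mpr hne
    obtain ⟨Q, _, _, f, hf⟩ := exists_surjective_isSimpleGroup (G ⧸ I.goursatFst)
    have : Finite Q := Finite.of_surjective f hf
    exact hGH Q (f.comp (QuotientGroup.mk' _))
      ((f.comp e.symm.toMonoidHom).comp (QuotientGroup.mk' _))
      (hf.comp (QuotientGroup.mk'_surjective _))
      ((hf.comp e.symm.surjective).comp (QuotientGroup.mk'_surjective _))
  have hsnd : I.goursatSnd = ⊤ := by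
    have : Subsingleton (G ⧸ I.goursatFst) := QuotientGroup.subsingleton_iff.mpr hfst
    exact QuotientGroup.subsingleton_iff.mp e.symm.injective.subsingleton
  rw [eq_top_iff, ← Subgroup.top_prod_top, ← hfst, ← hsnd]
  exact goursatFst_prod_goursatSnd_le I

def MulEquiv.piFinSucc {n : ℕ} (G : Fin (n + 1) → Type*) [∀ i, Mul (G i)] :
    (∀ i, G i) ≃* G 0 × ∀ i : Fin n, G i.succ :=
  { (Fin.consEquiv G).symm with map_mul' := fun _ _ => rfl }

theorem Subgroup.surjective_on_map {G G' M : Type*} [Group G] [Group G'] {K : Subgroup G}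
    (φ : G →* G') (p : G' → M) (h : Surjective fun k : K => p (φ k)) :
    Surjective fun k : K.map φ => p k := fun m =>
  let ⟨k, hk⟩ := h m
  ⟨⟨φ k, mem_map_of_mem φ k.2⟩, hk⟩

theorem Subgroup.eq_top_of_pairwise_noCommonFiniteSimpleQuotient {n : ℕ} {G : Fin n → Type u}
    [∀ i, Group (G i)] [∀ i, Finite (G i)]
    (hG : Pairwise fun i j => NoCommonFiniteSimpleQuotient (G i) (G j)) {K : Subgroup (∀ i, G i)}
    (hK : ∀ i, Surjective fun k : K => (k : ∀ i, G i) i) : K = ⊤ := by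
  induction n with
  | zero => exact Subsingleton.elim K ⊤
  | succ n ih =>
    let φ := MulEquiv.piFinSucc G
    let tail := (MonoidHom.snd _ _).comp φ.toMonoidHom
    have htail : K.map tail = ⊤ :=
      ih (fun i j hij => hG ((Fin.succ_injective n).ne hij))
        fun i => K.surjective_on_map tail (fun y => y i) (hK i.succ)
    have hφ : K.map φ.toMonoidHom = ⊤ := by
      refine eq_top_of_noCommonFiniteSimpleQuotient
        (NoCommonFiniteSimpleQuotient.pi fun i => hG (Fin.succ_ne_zero i).symm)
        (K.surjective_on_map φ.toMonoidHom Prod.fst (hK 0)) fun t => ?_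
      obtain ⟨k, hk, rfl⟩ := htail ▸ mem_top t
      exact ⟨⟨φ k, mem_map_of_mem _ hk⟩, rfl⟩
    exact map_injective φ.injective
      (hφ.trans (map_top_of_surjective φ.toMonoidHom φ.surjective).symm)

theorem Subgroup.eq_top_of_isClosed_of_forall_sup_eq_top {G : Type*} [Group G] [TopologicalSpace G]
    [IsTopologicalGroup G] [CompactSpace G] [TotallyDisconnectedSpace G] {H : Subgroup G}
    (hH : IsClosed (H : Set G)) (h : ∀ N : OpenNormalSubgroup G, H ⊔ N = ⊤) : H = ⊤ := by
  rw [eq_top_iff, show H = _ from ProfiniteGrp.closedSubgroup_eq_sInf_open ⟨H, hH⟩]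
  refine le_sInf fun O ⟨hO, hHO⟩ => ?_
  obtain ⟨N, hN⟩ := ProfiniteGrp.exist_openNormalSubgroup_sub_open_nhds_of_one hO O.one_mem
  exact h N ▸ sup_le hHO hN

def OpenNormalSubgroup.comap {G G' : Type*} [Group G] [TopologicalSpace G] [Group G']
    [TopologicalSpace G'] (f : G →* G') (hf : Continuous f) (N : OpenNormalSubgroup G') :
    OpenNormalSubgroup G :=
  { OpenSubgroup.comap f hf N.toOpenSubgroup with isNormal' := N.isNormal'.comap f }

theorem noCommonFiniteSimpleQuotient_quotient {G : Type u} {H : Type v} [Group G]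
    [TopologicalSpace G] [SeparatelyContinuousMul G] [Group H] [TopologicalSpace H]
    [SeparatelyContinuousMul H]
    (U : OpenNormalSubgroup G) (V : OpenNormalSubgroup H)
    (h : ∀ (Q : Type u) [Group Q] [Finite Q] [IsSimpleGroup Q] [TopologicalSpace Q]
      [DiscreteTopology Q], ¬ ((∃ f : G →* Q, Continuous f ∧ Surjective f) ∧
        ∃ g : H →* Q, Continuous g ∧ Surjective g)) :
    NoCommonFiniteSimpleQuotient (G ⧸ (U : Subgroup G)) (H ⧸ (V : Subgroup H)) := by
  intro Q _ _ _ f g hf hg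
  let : TopologicalSpace Q := ⊥
  have : DiscreteTopology Q := ⟨rfl⟩
  exact h Q ⟨⟨f.comp (QuotientGroup.mk' _), (continuous_of_discreteTopology (f := f)).comp
      QuotientGroup.continuous_mk, hf.comp (QuotientGroup.mk'_surjective _)⟩,
    ⟨g.comp (QuotientGroup.mk' _), (continuous_of_discreteTopology (f := g)).comp
      QuotientGroup.continuous_mk, hg.comp (QuotientGroup.mk'_surjective _)⟩⟩

theorem goursat_profinite_general
    (n : ℕ) (B : Fin n → Type) [∀ i, Group (B i)] [∀ i, TopologicalSpace (B i)]
    [∀ i, IsTopologicalGroup (B i)] [∀ i, CompactSpace (B i)]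
    [∀ i, TotallyDisconnectedSpace (B i)]
    (hsimple : ∀ i j, i ≠ j →
      ∀ (Q : Type) [Group Q] [Finite Q] [IsSimpleGroup Q] [TopologicalSpace Q] [DiscreteTopology Q],
        ¬ ((∃ f : B i →* Q, Continuous f ∧ Function.Surjective f) ∧
            (∃ g : B j →* Q, Continuous g ∧ Function.Surjective g)))
    (H : Subgroup (∀ i, B i)) (hH : IsClosed (H : Set (∀ i, B i)))
    (hproj : ∀ j, Function.Surjective fun h : H => (h : ∀ i, B i) j) :
    H = ⊤ := by
  refine H.eq_top_of_isClosed_of_forall_sup_eq_top hH fun N => ?_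
  let U i : OpenNormalSubgroup (B i) := N.comap (MonoidHom.mulSingle B i) (continuous_mulSingle i)
  let ψ := MonoidHom.piMap fun i => QuotientGroup.mk' (U i : Subgroup (B i))
  have hψ : H.map ψ = ⊤ :=
    Subgroup.eq_top_of_pairwise_noCommonFiniteSimpleQuotient
      (fun i j hij => noCommonFiniteSimpleQuotient_quotient (U i) (U j) (hsimple i j hij))
      fun j => H.surjective_on_map ψ (fun y => y j) (QuotientGroup.mk_surjective.comp (hproj j))
  have hker : ψ.ker ≤ N := fun x hx =>
    Subgroup.pi_mem_of_mulSingle_mem x fun i => (QuotientGroup.eq_one_iff (x i)).mp (congrFun hx i)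
  refine top_unique ?_
  calc ⊤ = (H.map ψ).comap ψ := by rw [hψ, Subgroup.comap_top]
    _ = H ⊔ ψ.ker := Subgroup.comap_map_eq ψ H
    _ ≤ H ⊔ N := sup_le_sup_left hker H

/-- Goursat-type lemma for profinite groups: let `B₁, …, Bₙ` be
profinite groups such that for all distinct `i, j`, the groups `Bᵢ` and `Bⱼ` have no
finite simple group as a common continuous quotient.  If `H` is a closed subgroup of
`∏ᵢ Bᵢ` projecting surjectively onto each factor, then `H = ∏ᵢ Bᵢ`. -/
theorem goursat_profinite
    (n : ℕ) (B : Fin n → Type) [∀ i, Group (B i)] [∀ i, TopologicalSpace (B i)]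
    [∀ i, IsTopologicalGroup (B i)] [∀ i, CompactSpace (B i)] [∀ i, T2Space (B i)]
    [∀ i, TotallyDisconnectedSpace (B i)]
    (hsimple : ∀ i j, i ≠ j →
      ∀ (Q : Type) [Group Q] [Finite Q] [IsSimpleGroup Q] [TopologicalSpace Q] [DiscreteTopology Q],
        ¬ ((∃ f : B i →* Q, Continuous f ∧ Function.Surjective f) ∧
            (∃ g : B j →* Q, Continuous g ∧ Function.Surjective g)))
    (H : Subgroup (∀ i, B i)) (hH : IsClosed (H : Set (∀ i, B i)))
    (hproj : ∀ j, Function.Surjective fun h : H => (h : ∀ i, B i) j) :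
    H = ⊤ :=
  goursat_profinite_general n B hsimple H hH hproj
end

section
/- For any prime power q > 1, the commutator subgroup of the principal congruence subgroup I + q·M₂(ℤ_ℓ) of GL₂(ℤ_ℓ) (where q = ℓᵉ) equals SL₂(ℤ_ℓ) ∩ (I + q²·M₂(ℤ_ℓ)). -/
/-!
The inclusion `⊆` is a first-order computation: for `x = 1 + ℓᵉ X` and `y = 1 + ℓᵉ Y` one has
`⁅x, y⁆ ≡ 1 + ℓ²ᵉ ⁅X, Y⁆ (mod ℓ²ᵉ⁺¹)`, commutators have determinant `1`, and the right-hand side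
is closed.

For `⊇`, a matrix `g = 1 + ℓⁿ C` in `SL₂` with `n ≥ 2e` is approximated one `ℓ`-adic digit at a
time. The condition `det g = 1` forces `ℓ ∣ tr C`, and modulo `ℓ` such a `C` is a sum of three Lie
brackets of elementary matrices. The leading terms `D` of the elements `1 + ℓⁿ D + O(ℓⁿ⁺¹)` of the
commutator subgroup are closed under addition and contain `ℓ M₂(ℤ_ℓ)` and every bracket `⁅X, Y⁆`
(the leading term of the commutator of `1 + ℓᵉ X` and `1 + ℓⁿ⁻ᵉ Y`). So some commutator agrees
with `g` modulo `ℓⁿ⁺¹`; iterating yields commutators converging to `g`.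
-/

open Matrix

/-- The principal congruence subgroup `{A ∈ GL₂(ℤ_ℓ) : A ≡ I (mod ℓᵉ)}`, i.e. the
kernel of reduction modulo `ℓᵉ`. -/
noncomputable def congruenceSubgroup (ℓ : ℕ) [Fact ℓ.Prime] (e : ℕ) :
    Subgroup (GL (Fin 2) ℤ_[ℓ]) :=
  (Matrix.GeneralLinearGroup.map (PadicInt.toZModPow (p := ℓ) e)).ker

open Filter Topology
open scoped commutatorElement

section FirstOrderExpansion

variable {R A : Type*} [CommRing R] [Ring A] [Algebra R A]

theorem Units.exists_val_inv_eq_one_add_smul {x : Aˣ} {r : R} {X : A}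
    (hx : (x : A) = 1 + r • X) : ∃ Y : A, ((x⁻¹ : Aˣ) : A) = 1 + r • Y := by
  refine ⟨-(((x⁻¹ : Aˣ) : A) * X), ?_⟩
  have h := x.inv_mul
  rw [hx, mul_add, mul_one, mul_smul_comm] at h
  rw [smul_neg, ← sub_eq_add_neg]
  exact eq_sub_of_add_eq h

theorem Units.exists_val_commutatorElement_eq {p : R} {a b : ℕ} (ha : 1 ≤ a) (hb : 1 ≤ b)
    {x y : Aˣ} {X Y : A} (hx : (x : A) = 1 + p ^ a • X) (hy : (y : A) = 1 + p ^ b • Y) :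
    ∃ E : A, ((⁅x, y⁆ : Aˣ) : A) = 1 + p ^ (a + b) • ⁅X, Y⁆ + p ^ (a + b + 1) • E := by
  obtain ⟨a, rfl⟩ := Nat.exists_eq_add_of_le' ha
  obtain ⟨b, rfl⟩ := Nat.exists_eq_add_of_le' hb
  obtain ⟨X', hX'⟩ := Units.exists_val_inv_eq_one_add_smul hx
  obtain ⟨Y', hY'⟩ := Units.exists_val_inv_eq_one_add_smul hy
  have hcomm : ((⁅x, y⁆ : Aˣ) : A) = 1 + (x * y - y * x) * (x⁻¹ * y⁻¹ : Aˣ) := by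
    have hyx : (y * x : A) * (x⁻¹ * y⁻¹ : Aˣ) = 1 := by simp [mul_assoc]
    rw [sub_mul, hyx, add_sub_cancel, commutatorElement_def]
    simp only [Units.val_mul, mul_assoc]
  have hdiff : (x * y - y * x : A) = p ^ (a + 1 + (b + 1)) • ⁅X, Y⁆ := by
    rw [hx, hy, Ring.lie_def]
    simp only [mul_add, add_mul, one_mul, mul_one, smul_mul_smul_comm]
    module
  refine ⟨⁅X, Y⁆ * (p ^ a • X' + p ^ b • Y' + p ^ (a + b + 1) • (X' * Y')), ?_⟩
  rw [hcomm, hdiff, Units.val_mul, hX', hY']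
  simp only [mul_add, add_mul, one_mul, mul_one, smul_add, smul_smul, mul_smul_comm,
    smul_mul_assoc]
  module

theorem exists_mul_eq_one_add_pow_smul {p : R} {n : ℕ} (hn : 1 ≤ n) {u v X Y E F : A}
    (hu : u = 1 + p ^ n • X + p ^ (n + 1) • E) (hv : v = 1 + p ^ n • Y + p ^ (n + 1) • F) :
    ∃ G : A, u * v = 1 + p ^ n • (X + Y) + p ^ (n + 1) • G := by
  obtain ⟨n, rfl⟩ := Nat.exists_eq_add_of_le' hn
  refine ⟨E + F + p ^ n • (X * Y) + p ^ (n + 1) • (X * F + E * Y) + p ^ (n + 2) • (E * F), ?_⟩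
  rw [hu, hv]
  simp only [mul_add, add_mul, one_mul, mul_one, smul_mul_smul_comm, smul_add, smul_smul]
  module

def leadingTerms (p : R) (H : Subgroup Aˣ) (n : ℕ) : Set A :=
  {D | ∃ c ∈ H, ∃ E : A, (c : A) = 1 + p ^ n • D + p ^ (n + 1) • E}

theorem smul_mem_leadingTerms (p : R) (H : Subgroup Aˣ) (n : ℕ) (D : A) :
    p • D ∈ leadingTerms p H n :=
  ⟨1, one_mem H, -D, by rw [Units.val_one, smul_smul, ← pow_succ, smul_neg, add_neg_cancel_right]⟩

theorem add_mem_leadingTerms {p : R} {H : Subgroup Aˣ} {n : ℕ} (hn : 1 ≤ n) {D D' : A}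
    (hD : D ∈ leadingTerms p H n) (hD' : D' ∈ leadingTerms p H n) :
    D + D' ∈ leadingTerms p H n := by
  obtain ⟨c, hc, E, hcE⟩ := hD
  obtain ⟨c', hc', E', hcE'⟩ := hD'
  obtain ⟨G, hG⟩ := exists_mul_eq_one_add_pow_smul hn hcE hcE'
  exact ⟨c * c', mul_mem hc hc', G, by rw [Units.val_mul, hG]⟩

theorem exists_val_inv_mul_eq_of_mem_leadingTerms {p : R} {H : Subgroup Aˣ} {n : ℕ} {g : Aˣ}
    {C : A} (hg : (g : A) = 1 + p ^ n • C) (hC : C ∈ leadingTerms p H n) :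
    ∃ c ∈ H, ∃ Y : A, ((c⁻¹ * g : Aˣ) : A) = 1 + p ^ (n + 1) • Y := by
  obtain ⟨c, hc, E, hcE⟩ := hC
  refine ⟨c, hc, -((c⁻¹ : Aˣ) * E : A), ?_⟩
  have hgc : (g : A) = c - p ^ (n + 1) • E := by rw [hg, hcE]; abel
  rw [Units.val_mul, hgc, mul_sub, Units.inv_mul, mul_smul_comm, smul_neg, sub_eq_add_neg]

end FirstOrderExpansion

namespace Matrix

variable {R : Type*} [CommRing R]

theorem det_one_add_smul_fin_two (r : R) (A : Matrix (Fin 2) (Fin 2) R) :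
    det (1 + r • A) = 1 + r * trace A + r ^ 2 * det A := by
  simp only [det_fin_two, trace_fin_two, add_apply, smul_apply, one_apply_eq,
    one_apply_ne (by decide : (0 : Fin 2) ≠ 1), one_apply_ne (by decide : (1 : Fin 2) ≠ 0),
    smul_eq_mul]
  ring

theorem dvd_trace_of_det_one_add_pow_smul_eq_one [IsDomain R] {p : R} (hp : p ≠ 0) {n : ℕ}
    (hn : 1 ≤ n) {C : Matrix (Fin 2) (Fin 2) R} (hC : det (1 + p ^ n • C) = 1) :
    p ∣ trace C := by
  rw [det_one_add_smul_fin_two] at hC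
  have htr : p ^ n * (trace C + p ^ n * det C) = 0 := by linear_combination hC
  rw [← neg_eq_of_add_eq_zero_left ((mul_eq_zero.mp htr).resolve_left (pow_ne_zero n hp))]
  exact (dvd_pow_self p (by omega)).mul_right _ |>.neg_right

theorem eq_lie_add_lie_add_lie_add_trace_smul (C : Matrix (Fin 2) (Fin 2) R) :
    C = ⁅(single 0 1 1 : Matrix (Fin 2) (Fin 2) R), single 1 0 (C 0 0)⁆ +
      ⁅(single 0 0 1 : Matrix (Fin 2) (Fin 2) R), single 0 1 (C 0 1)⁆ +
      ⁅(single 1 0 (C 1 0) : Matrix (Fin 2) (Fin 2) R), single 0 0 1⁆ +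
      trace C • single 1 1 1 := by
  ext i j
  fin_cases i <;> fin_cases j <;> simp [Ring.lie_def, trace_fin_two]

end Matrix

theorem Subgroup.commutator_le_ker {G A : Type*} [Group G] [CommGroup A] (f : G →* A)
    (H K : Subgroup G) : ⁅H, K⁆ ≤ f.ker :=
  (Subgroup.commutator_mono le_top le_top).trans
    ((_root_.commutator_def G).ge.trans (Abelianization.commutator_subset_ker f))

theorem Matrix.GeneralLinearGroup.isClosed_ker_det_s12 {n R : Type*} [Fintype n] [DecidableEq n]
    [CommRing R] [TopologicalSpace R] [IsTopologicalRing R] [T1Space R] :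
    IsClosed ((GeneralLinearGroup.det : GL n R →* Rˣ).ker : Set (GL n R)) := by
  have hker : ((GeneralLinearGroup.det : GL n R →* Rˣ).ker : Set (GL n R)) =
      {x : GL n R | Matrix.det (x : Matrix n n R) = 1} := by
    ext x
    simp [Units.ext_iff, GeneralLinearGroup.val_det_apply]
  rw [hker]
  exact isClosed_eq Units.continuous_val.matrix_det continuous_const

section Padic

variable {ℓ : ℕ} [hℓ : Fact ℓ.Prime]

local notation "M₂" => Matrix (Fin 2) (Fin 2) ℤ_[ℓ]

theorem mem_congruenceSubgroup_iff_dvd {n : ℕ} {x : GL (Fin 2) ℤ_[ℓ]} :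
    x ∈ congruenceSubgroup ℓ n ↔
      ∀ i j, (ℓ : ℤ_[ℓ]) ^ n ∣ ((x : M₂) - 1) i j := by
  simp only [congruenceSubgroup, MonoidHom.mem_ker, Units.ext_iff, ← Matrix.ext_iff,
    GeneralLinearGroup.map_apply, Units.val_one, Matrix.sub_apply, ← Ideal.mem_span_singleton,
    ← PadicInt.ker_toZModPow, RingHom.mem_ker, map_sub]
  exact forall₂_congr fun i j => by
    rw [sub_eq_zero, one_apply, one_apply]; split_ifs <;> simp

theorem mem_congruenceSubgroup_iff_exists {n : ℕ} {x : GL (Fin 2) ℤ_[ℓ]} :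
    x ∈ congruenceSubgroup ℓ n ↔ ∃ X : M₂, (x : M₂) = 1 + (ℓ : ℤ_[ℓ]) ^ n • X := by
  rw [mem_congruenceSubgroup_iff_dvd]
  constructor
  · intro h
    choose X hX using h
    refine ⟨of X, ?_⟩
    ext i j
    rw [Matrix.add_apply, Matrix.smul_apply, of_apply, smul_eq_mul, ← hX, Matrix.sub_apply,
      add_sub_cancel]
  · rintro ⟨X, hX⟩ i j
    exact ⟨X i j, by rw [hX, add_sub_cancel_left, Matrix.smul_apply, smul_eq_mul]⟩

theorem mem_congruenceSubgroup_iff_norm_le {n : ℕ} {x : GL (Fin 2) ℤ_[ℓ]} :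
    x ∈ congruenceSubgroup ℓ n ↔ ∀ i j, ‖((x : M₂) - 1) i j‖ ≤ (ℓ : ℝ) ^ (-(n : ℤ)) := by
  simp only [mem_congruenceSubgroup_iff_dvd, PadicInt.norm_le_pow_iff_mem_span_pow,
    Ideal.mem_span_singleton]

theorem congruenceSubgroup_anti : Antitone (congruenceSubgroup ℓ) := fun _ _ hmn _ hx =>
  mem_congruenceSubgroup_iff_dvd.mpr fun i j =>
    (pow_dvd_pow _ hmn).trans (mem_congruenceSubgroup_iff_dvd.mp hx i j)

theorem PadicInt.isUnit_one_add_of_dvd {z : ℤ_[ℓ]} (hz : (ℓ : ℤ_[ℓ]) ∣ z) : IsUnit (1 + z) := by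
  simpa using IsLocalRing.isUnit_one_sub_self_of_mem_nonunits (-z)
    (PadicInt.mem_nonunits.mpr ((PadicInt.norm_lt_one_iff_dvd _).mpr (dvd_neg.mpr hz)))

theorem exists_mem_congruenceSubgroup_val_eq {n : ℕ} (hn : 1 ≤ n) (X : M₂) :
    ∃ x ∈ congruenceSubgroup ℓ n, (x : M₂) = 1 + (ℓ : ℤ_[ℓ]) ^ n • X := by
  have hp : (ℓ : ℤ_[ℓ]) ∣ (ℓ : ℤ_[ℓ]) ^ n := dvd_pow_self _ (by omega)
  have hunit : IsUnit (1 + (ℓ : ℤ_[ℓ]) ^ n • X) := by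
    rw [isUnit_iff_isUnit_det, det_one_add_smul_fin_two, add_assoc]
    exact PadicInt.isUnit_one_add_of_dvd
      ((hp.mul_right _).add ((hp.trans (dvd_pow_self _ two_ne_zero)).mul_right _))
  exact ⟨hunit.unit, mem_congruenceSubgroup_iff_exists.mpr ⟨X, hunit.unit_spec⟩, hunit.unit_spec⟩

theorem commutator_congruenceSubgroup_le {e : ℕ} (he : 1 ≤ e) :
    ⁅congruenceSubgroup ℓ e, congruenceSubgroup ℓ e⁆ ≤ congruenceSubgroup ℓ (2 * e) := by
  rw [Subgroup.commutator_le]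
  intro x hx y hy
  obtain ⟨X, hX⟩ := mem_congruenceSubgroup_iff_exists.mp hx
  obtain ⟨Y, hY⟩ := mem_congruenceSubgroup_iff_exists.mp hy
  obtain ⟨E, hE⟩ := Units.exists_val_commutatorElement_eq he he hX hY
  refine mem_congruenceSubgroup_iff_exists.mpr ⟨⁅X, Y⁆ + (ℓ : ℤ_[ℓ]) • E, ?_⟩
  rw [hE, two_mul, smul_add, smul_smul, ← pow_succ, add_assoc]

theorem lie_mem_leadingTerms {e n : ℕ} (he : 1 ≤ e) (hn : 2 * e ≤ n) (X Y : M₂) :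
    ⁅X, Y⁆ ∈ leadingTerms (ℓ : ℤ_[ℓ]) ⁅congruenceSubgroup ℓ e, congruenceSubgroup ℓ e⁆ n := by
  obtain ⟨x, hx, hxX⟩ := exists_mem_congruenceSubgroup_val_eq he X
  obtain ⟨y, hy, hyY⟩ := exists_mem_congruenceSubgroup_val_eq (n := n - e) (by omega) Y
  obtain ⟨E, hE⟩ := Units.exists_val_commutatorElement_eq he (by omega) hxX hyY
  refine ⟨⁅x, y⁆, Subgroup.commutator_mem_commutator hx (congruenceSubgroup_anti ?_ hy), E, ?_⟩
  · omega
  · rwa [Nat.add_sub_cancel' (by omega)] at hE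

theorem mem_leadingTerms_of_dvd_trace {e n : ℕ} (he : 1 ≤ e) (hn : 2 * e ≤ n) {C : M₂}
    (hC : (ℓ : ℤ_[ℓ]) ∣ trace C) :
    C ∈ leadingTerms (ℓ : ℤ_[ℓ]) ⁅congruenceSubgroup ℓ e, congruenceSubgroup ℓ e⁆ n := by
  obtain ⟨t, ht⟩ := hC
  have hn₁ : 1 ≤ n := by omega
  rw [C.eq_lie_add_lie_add_lie_add_trace_smul, ht, mul_smul]
  refine add_mem_leadingTerms hn₁ (add_mem_leadingTerms hn₁ (add_mem_leadingTerms hn₁ ?_ ?_) ?_)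
    (smul_mem_leadingTerms _ _ _ _) <;> exact lie_mem_leadingTerms he hn _ _

theorem exists_inv_mul_mem_congruenceSubgroup_succ {e n : ℕ} (he : 1 ≤ e) (hn : 2 * e ≤ n)
    {g : GL (Fin 2) ℤ_[ℓ]} (hg : g ∈ GeneralLinearGroup.det.ker ⊓ congruenceSubgroup ℓ n) :
    ∃ c ∈ ⁅congruenceSubgroup ℓ e, congruenceSubgroup ℓ e⁆,
      c⁻¹ * g ∈ congruenceSubgroup ℓ (n + 1) := by
  obtain ⟨hdet, hgn⟩ := hg
  obtain ⟨C, hC⟩ := mem_congruenceSubgroup_iff_exists.mp hgn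
  have htr : (ℓ : ℤ_[ℓ]) ∣ trace C := by
    refine dvd_trace_of_det_one_add_pow_smul_eq_one (n := n)
      (Nat.cast_ne_zero.mpr hℓ.out.ne_zero) (by omega) ?_
    rw [← hC, ← GeneralLinearGroup.val_det_apply, MonoidHom.mem_ker.mp hdet, Units.val_one]
  obtain ⟨c, hc, Y, hY⟩ :=
    exists_val_inv_mul_eq_of_mem_leadingTerms hC (mem_leadingTerms_of_dvd_trace he hn htr)
  exact ⟨c, hc, mem_congruenceSubgroup_iff_exists.mpr ⟨Y, hY⟩⟩

theorem exists_inv_mul_mem_congruenceSubgroup {e : ℕ} (he : 1 ≤ e) {g : GL (Fin 2) ℤ_[ℓ]}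
    (hg : g ∈ GeneralLinearGroup.det.ker ⊓ congruenceSubgroup ℓ (2 * e)) {n : ℕ}
    (hn : 2 * e ≤ n) :
    ∃ h ∈ ⁅congruenceSubgroup ℓ e, congruenceSubgroup ℓ e⁆, h⁻¹ * g ∈ congruenceSubgroup ℓ n := by
  induction n, hn using Nat.le_induction with
  | base => exact ⟨1, one_mem _, by simpa using hg.2⟩
  | succ n hn ih =>
    obtain ⟨h, hh, hhg⟩ := ih
    have hdet : h⁻¹ * g ∈ GeneralLinearGroup.det.ker :=
      mul_mem (inv_mem (Subgroup.commutator_le_ker _ _ _ hh)) hg.1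
    obtain ⟨c, hc, hchg⟩ := exists_inv_mul_mem_congruenceSubgroup_succ he hn ⟨hdet, hhg⟩
    exact ⟨h * c, mul_mem hh hc, by rwa [_root_.mul_inv_rev, mul_assoc]⟩

theorem isClosed_congruenceSubgroup (n : ℕ) :
    IsClosed (congruenceSubgroup ℓ n : Set (GL (Fin 2) ℤ_[ℓ])) := by
  have hG : (congruenceSubgroup ℓ n : Set (GL (Fin 2) ℤ_[ℓ])) =
      ⋂ i, ⋂ j, {x : GL (Fin 2) ℤ_[ℓ] | ‖((x : M₂) - 1) i j‖ ≤ (ℓ : ℝ) ^ (-(n : ℤ))} := by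
    ext x
    simp only [SetLike.mem_coe, mem_congruenceSubgroup_iff_norm_le, Set.mem_iInter,
      Set.mem_ofPred_eq]
  rw [hG]
  exact isClosed_iInter fun i => isClosed_iInter fun j => isClosed_le
    ((Units.continuous_val.sub continuous_const).matrix_elem i j).norm continuous_const

theorem tendsto_val_one_of_forall_mem_congruenceSubgroup {r : ℕ → GL (Fin 2) ℤ_[ℓ]}
    (hr : ∀ n, r n ∈ congruenceSubgroup ℓ n) :
    Tendsto (fun n => (r n : M₂)) atTop (𝓝 1) := by
  have hgeom : Tendsto (fun n : ℕ => (ℓ : ℝ) ^ (-(n : ℤ))) atTop (𝓝 0) := by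
    simp only [_root_.zpow_neg, zpow_natCast, ← inv_pow]
    exact tendsto_pow_atTop_nhds_zero_of_lt_one (by positivity)
      (inv_lt_one_of_one_lt₀ (by exact_mod_cast hℓ.out.one_lt))
  have hsub : Tendsto (fun n => (r n : M₂) - 1) atTop (𝓝 0) :=
    tendsto_pi_nhds.mpr fun i => tendsto_pi_nhds.mpr fun j =>
      squeeze_zero_norm (fun n => mem_congruenceSubgroup_iff_norm_le.mp (hr n) i j) hgeom
  simpa using hsub.add_const 1

theorem tendsto_one_of_forall_mem_congruenceSubgroup {r : ℕ → GL (Fin 2) ℤ_[ℓ]}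
    (hr : ∀ n, r n ∈ congruenceSubgroup ℓ n) : Tendsto r atTop (𝓝 1) := by
  rw [Units.isInducing_embedProduct.tendsto_nhds_iff]
  exact (tendsto_val_one_of_forall_mem_congruenceSubgroup hr).prodMk_nhds
    ((MulOpposite.continuous_op.tendsto _).comp
      (tendsto_val_one_of_forall_mem_congruenceSubgroup fun n => inv_mem (hr n)))

theorem mem_closure_of_forall_exists_inv_mul_mem {s : Set (GL (Fin 2) ℤ_[ℓ])}
    {g : GL (Fin 2) ℤ_[ℓ]} (h : ∀ n, ∃ x ∈ s, x⁻¹ * g ∈ congruenceSubgroup ℓ n) :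
    g ∈ closure s := by
  choose x hxs hx using h
  have hlim :=
    tendsto_const_nhds (x := g) |>.mul (tendsto_one_of_forall_mem_congruenceSubgroup hx).inv
  refine mem_closure_of_tendsto (f := x) (b := atTop) ?_ (Eventually.of_forall hxs)
  simpa using hlim

end Padic

/-- for a prime power `q = ℓᵉ > 1`, the closed commutator subgroup of
`I + q·M₂(ℤ_ℓ)` equals `SL₂(ℤ_ℓ) ∩ (I + q²·M₂(ℤ_ℓ))`. -/
theorem commutator_congruenceSubgroup (ℓ : ℕ) [Fact ℓ.Prime] (e : ℕ) (he : 1 ≤ e) :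
    (⁅congruenceSubgroup ℓ e, congruenceSubgroup ℓ e⁆ :
        Subgroup (GL (Fin 2) ℤ_[ℓ])).topologicalClosure
      = (Matrix.GeneralLinearGroup.det (n := Fin 2) (R := ℤ_[ℓ])).ker ⊓
          congruenceSubgroup ℓ (2 * e) := by
  refine le_antisymm (Subgroup.topologicalClosure_minimal _ ?_ ?_) fun g hg => ?_
  · exact le_inf (Subgroup.commutator_le_ker _ _ _) (commutator_congruenceSubgroup_le he)
  · exact GeneralLinearGroup.isClosed_ker_det_s12.inter (isClosed_congruenceSubgroup _)
  · refine mem_closure_of_forall_exists_inv_mul_mem fun n => ?_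
    obtain ⟨h, hh, hhg⟩ := exists_inv_mul_mem_congruenceSubgroup he hg (Nat.le_add_left _ n)
    exact ⟨h, hh, congruenceSubgroup_anti (Nat.le_add_right n _) hhg⟩
end

section
/- Let m ≥ 2 be an integer and let H be an open subgroup of GL₂(ℤ_m) (where ℤ_m = ∏_{ℓ|m} ℤ_ℓ). Then H has only finitely many closed maximal (proper) subgroups, and every closed maximal subgroup of H is open. -/
/-!
An open subgroup `H` of `GL₂(ℤ_m)` contains a principal congruence subgroup
`Γ(m^e) = 1 + m^e M₂(ℤ_m)`. For `n ≥ 2` these subgroups have a Frattini-type property: modulo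
`Γ(m^(n+2))`, every element of `Γ(m^(n+1))` is the `m`-th power of an element of `Γ(m^n)`
(binomial expansion), and for `k ∈ Γ(m^n)`, `u ∈ Γ(m^(n+1))` the `m`-th power of `k u` is that
of `k` (`Γ(m^n)` is abelian modulo `Γ(m^(2n))`). Hence if `Γ(m^n) ⊆ K Γ(m^(n+1))` then
`Γ(m^n) ⊆ K Γ(m^(n+j))` for every `j`, and a closed `K` contains `Γ(m^n)`.

A closed maximal subgroup `K` of `H` either contains the open subgroup `N = Γ(m^(e+3))`, or
`K N` is an open, hence closed, subgroup strictly larger than `K`, so `K N = H ⊇ Γ(m^(e+2))` and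
the Frattini property again gives `N ≤ K`. Thus every closed maximal subgroup of `H` is open,
and they correspond to subgroups of the finite group `GL₂(ℤ_m) / N`.
-/

open Matrix

instance factPrimeDvd {N : ℕ} (p : {p : ℕ // p.Prime ∧ p ∣ N}) : Fact (p.1.Prime) :=
  ⟨p.2.1⟩

/-- The ring `ℤ_m = ∏_{ℓ ∣ m} ℤ_ℓ`, the product of the `ℓ`-adic integers over the
primes `ℓ` dividing `m`. -/
abbrev Zadic (m : ℕ) : Type := (p : {p : ℕ // p.Prime ∧ p ∣ m}) → ℤ_[p.1]

namespace Matrix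

variable {l m n R : Type*} [CommRing R]

def DvdEntries (c : R) (A : Matrix m n R) : Prop := ∀ i j, c ∣ A i j

namespace DvdEntries

variable {c d : R} {A B : Matrix m n R}

theorem zero (c : R) : DvdEntries c (0 : Matrix m n R) := fun _ _ => dvd_zero c

theorem add (hA : DvdEntries c A) (hB : DvdEntries c B) : DvdEntries c (A + B) :=
  fun i j => dvd_add (hA i j) (hB i j)

theorem neg (hA : DvdEntries c A) : DvdEntries c (-A) := fun i j => (hA i j).neg_right

theorem sub (hA : DvdEntries c A) (hB : DvdEntries c B) : DvdEntries c (A - B) :=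
  fun i j => dvd_sub (hA i j) (hB i j)

theorem of_dvd (h : c ∣ d) (hA : DvdEntries d A) : DvdEntries c A :=
  fun i j => h.trans (hA i j)

theorem nsmul (t : ℕ) (hA : DvdEntries c A) : DvdEntries ((t : R) * c) (t • A) :=
  fun i j => by rw [smul_apply, nsmul_eq_mul]; exact mul_dvd_mul_left _ (hA i j)

theorem smul (d : R) (B : Matrix m n R) : DvdEntries d (d • B) :=
  fun i j => Dvd.intro (B i j) rfl

theorem mul [Fintype m] {B : Matrix l m R} {A : Matrix m n R} (hB : DvdEntries d B)
    (hA : DvdEntries c A) : DvdEntries (d * c) (B * A) :=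
  fun i j => Finset.dvd_sum fun k _ => mul_dvd_mul (hB i k) (hA k j)

theorem mul_left [Fintype m] (B : Matrix l m R) (hA : DvdEntries c A) : DvdEntries c (B * A) :=
  fun _ j => Finset.dvd_sum fun k _ => (hA k j).mul_left _

theorem mul_right [Fintype n] (B : Matrix n l R) (hA : DvdEntries c A) : DvdEntries c (A * B) :=
  fun i _ => Finset.dvd_sum fun k _ => (hA i k).mul_right _

theorem one_add_pow_sub [Fintype m] [DecidableEq m] {A : Matrix m m R} (hA : DvdEntries c A)
    (t : ℕ) : DvdEntries (c ^ 2) ((1 + A) ^ t - (1 + t • A)) := by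
  induction t with
  | zero => simpa using zero (c ^ 2)
  | succ t ih =>
    have h : (1 + A) ^ (t + 1) - (1 + (t + 1) • A)
        = ((1 + A) ^ t - (1 + t • A)) * (1 + A) + (t • A) * A := by
      rw [pow_succ, succ_nsmul]; noncomm_ring
    rw [h]
    refine (mul_right _ ih).add ?_
    rw [pow_two c]
    exact ((hA.nsmul t).of_dvd (dvd_mul_left c _)).mul hA

end DvdEntries

end Matrix

namespace Matrix.GeneralLinearGroup

open scoped commutatorElement Pointwise

variable {ι R : Type*} [Fintype ι] [DecidableEq ι] [CommRing R]

variable (ι) in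
def congruenceSubgroup (c : R) : Subgroup (GL ι R) where
  carrier := {x | DvdEntries c (x.val - 1)}
  one_mem' := by simpa using DvdEntries.zero c
  mul_mem' {x y} hx hy := by
    have h : (x * y).val - 1 = (x.val - 1) * y.val + (y.val - 1) := by
      rw [Units.val_mul]; noncomm_ring
    simpa only [Set.mem_ofPred_eq, h] using (DvdEntries.mul_right _ hx).add hy
  inv_mem' {x} hx := by
    have h : (x⁻¹).val - 1 = -((x⁻¹).val * (x.val - 1)) := by
      rw [mul_sub, mul_one, x.inv_mul, neg_sub]
    simpa only [Set.mem_ofPred_eq, h] using (DvdEntries.mul_left _ hx).neg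

variable {c d : R}

theorem mem_congruenceSubgroup {x : GL ι R} :
    x ∈ congruenceSubgroup ι c ↔ DvdEntries c (x.val - 1) := Iff.rfl

theorem congruenceSubgroup_le_of_dvd (h : c ∣ d) :
    congruenceSubgroup ι d ≤ congruenceSubgroup ι c :=
  fun _ hx => DvdEntries.of_dvd h hx

instance (c : R) : (congruenceSubgroup ι c).Normal where
  conj_mem x hx g := by
    have h : (g * x * g⁻¹).val - 1 = g.val * (x.val - 1) * (g⁻¹).val := by
      rw [Units.val_mul, Units.val_mul, mul_sub, sub_mul, mul_one, g.mul_inv]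
    rw [mem_congruenceSubgroup, h]
    exact DvdEntries.mul_right _ (DvdEntries.mul_left _ hx)

theorem commutatorElement_mem {k u : GL ι R} (hk : k ∈ congruenceSubgroup ι c)
    (hu : u ∈ congruenceSubgroup ι d) : ⁅k, u⁆ ∈ congruenceSubgroup ι (c * d) := by
  have h : (⁅k, u⁆ : GL ι R).val - 1
      = ((k.val - 1) * (u.val - 1) - (u.val - 1) * (k.val - 1)) * (k⁻¹.val * u⁻¹.val) := by
    have hcomm : (k.val - 1) * (u.val - 1) - (u.val - 1) * (k.val - 1)
        = k.val * u.val - u.val * k.val := by noncomm_ring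
    rw [hcomm, sub_mul, commutatorElement_def]
    simp only [Units.val_mul, mul_assoc, Units.mul_inv_cancel_left, Units.mul_inv]
  rw [mem_congruenceSubgroup, h]
  exact DvdEntries.mul_right _ ((hk.mul hu).sub (mul_comm c d ▸ hu.mul hk))

theorem inv_mul_mem_congruenceSubgroup {x y : GL ι R} (h : DvdEntries c (y.val - x.val)) :
    x⁻¹ * y ∈ congruenceSubgroup ι c := by
  have h' : (x⁻¹ * y).val - 1 = x⁻¹.val * (y.val - x.val) := by
    rw [Units.val_mul, mul_sub, x.inv_mul]
  rw [mem_congruenceSubgroup, h']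
  exact DvdEntries.mul_left _ h

theorem isUnit_of_dvdEntries_sub_one (hc : c ∈ (⊥ : Ideal R).jacobson) {X : Matrix ι ι R}
    (hX : DvdEntries c (X - 1)) : IsUnit X := by
  have hjac : X - 1 ∈ (⊥ : Ideal (Matrix ι ι R)).jacobson := by
    rw [← Ideal.matrix_bot ι]
    exact Ideal.matrix_jacobson_le ⊥ fun i j => (⊥ : Ideal R).jacobson.mem_of_dvd (hX i j) hc
  obtain ⟨Y, hY⟩ := Ideal.exists_mul_sub_mem_of_sub_one_mem_jacobson X hjac
  rw [Ideal.mem_bot, sub_eq_zero] at hY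
  exact (isUnit_iff_isUnit_det X).2 (isUnit_det_of_left_inverse hY)

section NatModulus

variable {m n : ℕ}

theorem pow_mem_congruenceSubgroup_pow_succ (hn : 1 ≤ n) {u : GL ι R}
    (hu : u ∈ congruenceSubgroup ι ((m : R) ^ n)) :
    u ^ m ∈ congruenceSubgroup ι ((m : R) ^ (n + 1)) := by
  set A := u.val - 1
  have h : (u ^ m).val - 1 = ((1 + A) ^ m - (1 + m • A)) + m • A := by
    rw [Units.val_pow_eq_pow_val, add_sub_cancel]; abel
  rw [mem_congruenceSubgroup, h]
  refine DvdEntries.add ((hu.one_add_pow_sub m).of_dvd ?_) ((hu.nsmul m).of_dvd (pow_succ' _ n).dvd)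
  rw [← pow_mul]
  exact pow_dvd_pow _ (by omega)

theorem inv_pow_mul_mul_pow_mem (hn : 1 ≤ n) {k u : GL ι R}
    (hk : k ∈ congruenceSubgroup ι ((m : R) ^ n))
    (hu : u ∈ congruenceSubgroup ι ((m : R) ^ (n + 1))) :
    (k ^ m)⁻¹ * (k * u) ^ m ∈ congruenceSubgroup ι ((m : R) ^ (n + 2)) := by
  set N := congruenceSubgroup ι ((m : R) ^ (n + 2))
  have hcomm : Commute (k : GL ι R ⧸ N) (u : GL ι R ⧸ N) := by
    have h : (QuotientGroup.mk' N) ⁅k, u⁆ = 1 := (QuotientGroup.eq_one_iff _).2 <|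
      congruenceSubgroup_le_of_dvd (by rw [← pow_add]; exact pow_dvd_pow _ (by omega))
        (commutatorElement_mem hk hu)
    rwa [map_commutatorElement, commutatorElement_eq_one_iff_commute] at h
  have hum : (u : GL ι R ⧸ N) ^ m = 1 := by
    rw [← QuotientGroup.mk_pow, QuotientGroup.eq_one_iff]
    exact pow_mem_congruenceSubgroup_pow_succ (by omega) hu
  rw [← QuotientGroup.eq, QuotientGroup.mk_pow, QuotientGroup.mk_pow, QuotientGroup.mk_mul,
    hcomm.mul_pow, hum, mul_one]

theorem exists_inv_pow_mul_mem (hm : (m : R) ∈ (⊥ : Ideal R).jacobson) (hn : 2 ≤ n)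
    {v : GL ι R} (hv : v ∈ congruenceSubgroup ι ((m : R) ^ (n + 1))) :
    ∃ w ∈ congruenceSubgroup ι ((m : R) ^ n),
      (w ^ m)⁻¹ * v ∈ congruenceSubgroup ι ((m : R) ^ (n + 2)) := by
  choose B hB using hv
  -- `v = 1 + m ^ (n + 1) • B`; its approximate `m`-th root is `w = 1 + m ^ n • B`
  set A : Matrix ι ι R := (m : R) ^ n • Matrix.of B
  have hA : DvdEntries ((m : R) ^ n) A := DvdEntries.smul _ _
  have hvA : v.val - 1 = m • A := by
    ext i j
    simp only [hB i j, A, smul_apply, of_apply, nsmul_eq_mul, smul_eq_mul, pow_succ']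
    ring
  have hunit : IsUnit (1 + A) :=
    isUnit_of_dvdEntries_sub_one hm (by
      rw [add_sub_cancel_left]; exact hA.of_dvd (dvd_pow_self _ (by omega)))
  refine ⟨hunit.unit, ?_, inv_mul_mem_congruenceSubgroup ?_⟩
  · rw [mem_congruenceSubgroup, hunit.unit_spec, add_sub_cancel_left]
    exact hA
  · have h : v.val - (hunit.unit ^ m).val = -((1 + A) ^ m - (1 + m • A)) := by
      rw [Units.val_pow_eq_pow_val, hunit.unit_spec, ← hvA]; abel
    rw [h]
    refine (hA.one_add_pow_sub m).neg.of_dvd ?_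
    rw [← pow_mul]
    exact pow_dvd_pow _ (by omega)

theorem congruenceSubgroup_pow_succ_le_sup (hm : (m : R) ∈ (⊥ : Ideal R).jacobson)
    (hn : 2 ≤ n) {K : Subgroup (GL ι R)}
    (h : congruenceSubgroup ι ((m : R) ^ n) ≤ K ⊔ congruenceSubgroup ι ((m : R) ^ (n + 1))) :
    congruenceSubgroup ι ((m : R) ^ (n + 1)) ≤
      K ⊔ congruenceSubgroup ι ((m : R) ^ (n + 2)) := by
  intro v hv
  obtain ⟨w, hw, hwv⟩ := exists_inv_pow_mul_mem hm hn hv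
  obtain ⟨k, hk, u, hu, rfl⟩ :
      w ∈ (K : Set (GL ι R)) * (congruenceSubgroup ι ((m : R) ^ (n + 1)) : Set (GL ι R)) := by
    rw [← Subgroup.mul_normal]; exact h hw
  have hkU : k ∈ congruenceSubgroup ι ((m : R) ^ n) := by
    simpa using mul_mem hw (inv_mem (congruenceSubgroup_le_of_dvd (pow_dvd_pow _ n.le_succ) hu))
  have hv' : v = k ^ m * (((k ^ m)⁻¹ * (k * u) ^ m) * (((k * u) ^ m)⁻¹ * v)) := by group
  rw [hv']
  exact Subgroup.mul_mem_sup (pow_mem hk m)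
    (mul_mem (inv_pow_mul_mul_pow_mem (by omega) hkU hu) hwv)

theorem congruenceSubgroup_le_sup_pow_add (hm : (m : R) ∈ (⊥ : Ideal R).jacobson) (hn : 2 ≤ n)
    {K : Subgroup (GL ι R)}
    (h : congruenceSubgroup ι ((m : R) ^ n) ≤ K ⊔ congruenceSubgroup ι ((m : R) ^ (n + 1)))
    (j : ℕ) :
    congruenceSubgroup ι ((m : R) ^ n) ≤ K ⊔ congruenceSubgroup ι ((m : R) ^ (n + j)) := by
  have step : ∀ j, congruenceSubgroup ι ((m : R) ^ (n + j)) ≤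
      K ⊔ congruenceSubgroup ι ((m : R) ^ (n + j + 1)) := by
    intro j
    induction j with
    | zero => exact h
    | succ j ih => exact congruenceSubgroup_pow_succ_le_sup (n := n + j) hm (by omega) ih
  induction j with
  | zero => exact le_sup_right
  | succ j ih => exact ih.trans (sup_le le_sup_left (step j))

end NatModulus

end Matrix.GeneralLinearGroup

instance Matrix.instCompactSpace {m n R : Type*} [TopologicalSpace R] [CompactSpace R] :
    CompactSpace (Matrix m n R) :=
  inferInstanceAs (CompactSpace (m → n → R))

namespace PadicInt

variable {p : ℕ} [Fact p.Prime]

theorem isOpen_ideal {s : Ideal ℤ_[p]} (hs : s ≠ ⊥) : IsOpen (s : Set ℤ_[p]) := by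
  obtain ⟨n, rfl⟩ := ideal_eq_span_pow_p hs
  have h : (Ideal.span {(p : ℤ_[p]) ^ n} : Set ℤ_[p]) =
      Metric.closedBall 0 ((p : ℝ) ^ (-n : ℤ)) := by
    ext z
    rw [SetLike.mem_coe, ← norm_le_pow_iff_mem_span_pow, mem_closedBall_zero_iff]
  rw [h]
  exact IsUltrametricDist.isOpen_closedBall _ (zpow_pos (mod_cast (Fact.out : p.Prime).pos) _).ne'

end PadicInt

namespace Zadic

open Filter Topology Matrix.GeneralLinearGroup

variable {m : ℕ}

theorem finite_primes_dvd (hm : m ≠ 0) : Finite {p : ℕ // p.Prime ∧ p ∣ m} :=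
  Finite.of_injective
    (fun p => (⟨p.1, Nat.mem_primeFactors.2 ⟨p.2.1, p.2.2, hm⟩⟩ : m.primeFactors))
    fun _ _ h => Subtype.ext (Subtype.mk.inj h)

theorem norm_natCast_lt_one (p : {p : ℕ // p.Prime ∧ p ∣ m}) : ‖(m : ℤ_[p.1])‖ < 1 :=
  (PadicInt.norm_lt_one_iff_dvd _).2 (Nat.cast_dvd_cast p.2.2)

theorem natCast_mem_jacobson_bot : (m : Zadic m) ∈ (⊥ : Ideal (Zadic m)).jacobson := by
  refine Ideal.mem_jacobson_bot.2 fun y => Pi.isUnit_iff.2 fun p => ?_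
  have hp : (m : ℤ_[p.1]) ∈ (⊥ : Ideal ℤ_[p.1]).jacobson := by
    rw [IsLocalRing.jacobson_eq_maximalIdeal _ bot_ne_top, IsLocalRing.mem_maximalIdeal,
      PadicInt.mem_nonunits]
    exact norm_natCast_lt_one p
  simpa using Ideal.mem_jacobson_bot.1 hp (y p)

theorem isOpen_setOf_natCast_pow_dvd (hm : m ≠ 0) (n : ℕ) :
    IsOpen {r : Zadic m | (m : Zadic m) ^ n ∣ r} := by
  have h : {r : Zadic m | (m : Zadic m) ^ n ∣ r}
      = ⋂ p, (fun r : Zadic m => r p) ⁻¹'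
          (Ideal.span {(m : ℤ_[p.1]) ^ n} : Set ℤ_[p.1]) := by
    ext r
    simp only [Set.mem_ofPred_eq, Set.mem_iInter, Set.mem_preimage, SetLike.mem_coe,
      Ideal.mem_span_singleton]
    constructor
    · rintro ⟨c, rfl⟩ p
      exact ⟨c p, by simp⟩
    · intro h
      choose c hc using h
      exact ⟨c, funext fun p => by simp [hc p]⟩
  have := finite_primes_dvd hm
  rw [h]
  refine isOpen_iInter_of_finite fun p => (PadicInt.isOpen_ideal ?_).preimage (continuous_apply p)
  exact Ideal.span_singleton_eq_bot.not.2 (pow_ne_zero _ (Nat.cast_ne_zero.2 hm))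

variable {ι : Type*} [Fintype ι] [DecidableEq ι]

theorem isOpen_congruenceSubgroup (hm : m ≠ 0) (n : ℕ) :
    IsOpen (congruenceSubgroup ι ((m : Zadic m) ^ n) : Set (GL ι (Zadic m))) := by
  have h : (congruenceSubgroup ι ((m : Zadic m) ^ n) : Set (GL ι (Zadic m)))
      = Units.val ⁻¹' ⋂ i, ⋂ j, (fun X : Matrix ι ι (Zadic m) => (X - 1) i j) ⁻¹'
          {r | (m : Zadic m) ^ n ∣ r} := by
    ext x
    simp only [Set.mem_preimage, Set.mem_iInter]
    rfl
  rw [h]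
  refine IsOpen.preimage Units.continuous_val (isOpen_iInter_of_finite fun i =>
    isOpen_iInter_of_finite fun j => (isOpen_setOf_natCast_pow_dvd hm n).preimage ?_)
  exact (continuous_id.sub continuous_const).matrix_elem i j

theorem tendsto_zero_of_natCast_pow_dvd {r : ℕ → Zadic m}
    (hr : ∀ j, (m : Zadic m) ^ j ∣ r j) :
    Tendsto r atTop (𝓝 0) := by
  refine tendsto_pi_nhds.2 fun p => tendsto_zero_iff_norm_tendsto_zero.2 ?_
  refine squeeze_zero (fun _ => norm_nonneg _) (fun j => ?_)
    (tendsto_pow_atTop_nhds_zero_of_lt_one (norm_nonneg _) (norm_natCast_lt_one p))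
  obtain ⟨c, hc⟩ := hr j
  calc ‖r j p‖ = ‖(m : ℤ_[p.1])‖ ^ j * ‖c p‖ := by simp [hc, norm_mul, norm_pow]
    _ ≤ ‖(m : ℤ_[p.1])‖ ^ j := mul_le_of_le_one_right (by positivity) (c p).norm_le_one

theorem tendsto_val_of_mem_congruenceSubgroup {u : ℕ → GL ι (Zadic m)}
    (hu : ∀ j, u j ∈ congruenceSubgroup ι ((m : Zadic m) ^ j)) :
    Tendsto (fun j => (u j).val) atTop (𝓝 1) := by
  have h : Tendsto (fun j => (u j).val - 1) atTop (𝓝 0) :=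
    tendsto_pi_nhds.2 fun i => tendsto_pi_nhds.2 fun i' =>
      tendsto_zero_of_natCast_pow_dvd fun j => hu j i i'
  simpa using h.const_add 1

theorem tendsto_one_of_mem_congruenceSubgroup {u : ℕ → GL ι (Zadic m)}
    (hu : ∀ j, u j ∈ congruenceSubgroup ι ((m : Zadic m) ^ j)) : Tendsto u atTop (𝓝 1) := by
  rw [Units.isInducing_embedProduct.tendsto_nhds_iff]
  exact (tendsto_val_of_mem_congruenceSubgroup hu).prodMk_nhds
    ((MulOpposite.continuous_op.tendsto _).comp
      (tendsto_val_of_mem_congruenceSubgroup fun j => inv_mem (hu j)))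

theorem exists_congruenceSubgroup_subset {S : Set (GL ι (Zadic m))} (hS : S ∈ 𝓝 1) :
    ∃ n, (congruenceSubgroup ι ((m : Zadic m) ^ n) : Set (GL ι (Zadic m))) ⊆ S := by
  by_contra! h
  choose u hu huS using fun n => Set.not_subset.1 (h n)
  obtain ⟨n, hn⟩ := ((tendsto_one_of_mem_congruenceSubgroup hu).eventually hS).exists
  exact huS n hn

theorem mem_of_forall_mem_sup_congruenceSubgroup {K : Subgroup (GL ι (Zadic m))}
    (hK : IsClosed (K : Set (GL ι (Zadic m)))) {x : GL ι (Zadic m)}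
    (hx : ∀ j, x ∈ K ⊔ congruenceSubgroup ι ((m : Zadic m) ^ j)) : x ∈ K := by
  have hx' (j : ℕ) :
      ∃ k ∈ K, ∃ u ∈ congruenceSubgroup ι ((m : Zadic m) ^ j), k * u = x := by
    have := hx j
    rwa [← SetLike.mem_coe, Subgroup.mul_normal] at this
  choose k hk u hu hx' using hx'
  have hlim : Tendsto (fun j => x * (u j)⁻¹) atTop (𝓝 x) := by
    simpa using (tendsto_one_of_mem_congruenceSubgroup fun j => inv_mem (hu j)).const_mul x
  refine hK.mem_of_tendsto hlim (Eventually.of_forall fun j => ?_)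
  rw [← hx' j, mul_inv_cancel_right]
  exact hk j

theorem congruenceSubgroup_le_of_le_sup {K : Subgroup (GL ι (Zadic m))}
    (hK : IsClosed (K : Set (GL ι (Zadic m)))) {n : ℕ} (hn : 2 ≤ n)
    (h : congruenceSubgroup ι ((m : Zadic m) ^ n) ≤
      K ⊔ congruenceSubgroup ι ((m : Zadic m) ^ (n + 1))) :
    congruenceSubgroup ι ((m : Zadic m) ^ n) ≤ K := fun _ hv =>
  mem_of_forall_mem_sup_congruenceSubgroup hK fun j =>
    sup_le_sup_left (congruenceSubgroup_le_of_dvd (pow_dvd_pow _ (Nat.le_add_left j n))) K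
      (congruenceSubgroup_le_sup_pow_add natCast_mem_jacobson_bot hn h j hv)

end Zadic

namespace Subgroup

variable {G : Type*} [Group G]

theorem le_of_image_mk_subset {N K₁ K₂ : Subgroup G} (hN : N ≤ K₂)
    (h : (QuotientGroup.mk '' (K₁ : Set G) : Set (G ⧸ N)) ⊆
      QuotientGroup.mk '' (K₂ : Set G)) :
    K₁ ≤ K₂ := fun x hx => by
  obtain ⟨y, hy, hyx⟩ := h ⟨x, hx, rfl⟩
  simpa using K₂.mul_mem hy (hN (QuotientGroup.eq.1 hyx))

variable [TopologicalSpace G]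

def IsMaximalClosedIn (K H : Subgroup G) : Prop :=
  K ≤ H ∧ K ≠ H ∧ IsClosed (K : Set G) ∧
    ∀ K' : Subgroup G, IsClosed (K' : Set G) → K ≤ K' → K' ≤ H → K' = K ∨ K' = H

theorem IsMaximalClosedIn.le_of_isOpen [SeparatelyContinuousMul G] {K H N : Subgroup G}
    (hK : K.IsMaximalClosedIn H) (hN : IsOpen (N : Set G)) (hNH : N ≤ H)
    (hsup : K ⊔ N = H → N ≤ K) : N ≤ K := by
  obtain ⟨hKH, -, -, hmax⟩ := hK
  have hopen : IsOpen ((K ⊔ N : Subgroup G) : Set G) := isOpen_mono le_sup_right hN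
  rcases hmax _ (isClosed_of_isOpen _ hopen) le_sup_left (sup_le hKH hNH) with h | h
  · exact h ▸ le_sup_right
  · exact hsup h

theorem finite_setOf_le_of_isOpen [SeparatelyContinuousMul G] [CompactSpace G] {N : Subgroup G}
    (hN : IsOpen (N : Set G)) : {K : Subgroup G | N ≤ K}.Finite := by
  have := quotient_finite_of_isOpen N hN
  refine Set.Finite.of_finite_image
    (f := fun K : Subgroup G => (QuotientGroup.mk '' (K : Set G) : Set (G ⧸ N)))
    (Set.toFinite _) fun K₁ h₁ K₂ h₂ h => ?_
  exact le_antisymm (le_of_image_mk_subset h₂ h.le) (le_of_image_mk_subset h₁ h.ge)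

end Subgroup

open Matrix.GeneralLinearGroup Zadic in
/-- for `m ≥ 2`, an open subgroup `H` of `GL₂(ℤ_m)` has only finitely
many closed maximal (proper) subgroups, and every such subgroup is open. -/
theorem open_subgroup_GL2_finitely_many_maximal_closed (m : ℕ) (hm : 2 ≤ m)
    (H : Subgroup (GL (Fin 2) (Zadic m)))
    (hopen : IsOpen (H : Set (GL (Fin 2) (Zadic m)))) :
    {K : Subgroup (GL (Fin 2) (Zadic m)) |
        K ≤ H ∧ K ≠ H ∧ IsClosed (K : Set (GL (Fin 2) (Zadic m))) ∧
          ∀ K' : Subgroup (GL (Fin 2) (Zadic m)),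
            IsClosed (K' : Set (GL (Fin 2) (Zadic m))) → K ≤ K' → K' ≤ H →
              K' = K ∨ K' = H}.Finite ∧
      ∀ K ∈ {K : Subgroup (GL (Fin 2) (Zadic m)) |
        K ≤ H ∧ K ≠ H ∧ IsClosed (K : Set (GL (Fin 2) (Zadic m))) ∧
          ∀ K' : Subgroup (GL (Fin 2) (Zadic m)),
            IsClosed (K' : Set (GL (Fin 2) (Zadic m))) → K ≤ K' → K' ≤ H →
              K' = K ∨ K' = H},
        IsOpen (K : Set (GL (Fin 2) (Zadic m))) := by
  obtain ⟨e, he⟩ := exists_congruenceSubgroup_subset (hopen.mem_nhds H.one_mem)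
  have hle {a b : ℕ} (hab : a ≤ b) : congruenceSubgroup (Fin 2) ((m : Zadic m) ^ b) ≤
      congruenceSubgroup (Fin 2) ((m : Zadic m) ^ a) :=
    congruenceSubgroup_le_of_dvd (pow_dvd_pow _ hab)
  set N := congruenceSubgroup (Fin 2) ((m : Zadic m) ^ (e + 3))
  have hN : IsOpen (N : Set (GL (Fin 2) (Zadic m))) := isOpen_congruenceSubgroup (by omega) _
  have hmax (K : Subgroup (GL (Fin 2) (Zadic m))) (hK : K.IsMaximalClosedIn H) : N ≤ K :=
    hK.le_of_isOpen hN (fun x hx => he (hle (by omega) hx)) fun hsup =>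
      (hle (by omega)).trans <| congruenceSubgroup_le_of_le_sup hK.2.2.1 (n := e + 2) (by omega)
        (hsup ▸ fun x hx => he (hle (by omega) hx))
  exact ⟨(Subgroup.finite_setOf_le_of_isOpen hN).subset hmax,
    fun K hK => Subgroup.isOpen_mono (hmax K hK) hN⟩
end
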